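/- Let (V; ρ, θ, D, R_V) be a representation of a modified Rota-Baxter Lie-Yamaguti algebra (L,[-,-],{-,-,-},R). Then for all x, y in L and u in V the identity (4.3) holds: D(Rx,Ry)R_V u = R_V(D(Rx,Ry)u + D(Rx,y)R_V u + D(x,Ry)R_V u + D(x,y)u) - D(Rx,y)u - D(x,y)R_V u - D(x,Ry)u. -/

import Mathlib

/-- A Lie-Yamaguti algebra: bilinear bracket `br`, trilinear bracket `tr`,
satisfying (LY1)-(LY6). -/
structure LieYamaguti (K : Type*) (L : Type*) [Field K] [AddCommGroup L] [Module K L] where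
  br : L →ₗ[K] L →ₗ[K] L
  tr : L →ₗ[K] L →ₗ[K] L →ₗ[K] L
  ly1 : ∀ x y, br x y = - br y x
  ly2 : ∀ x y z, tr x y z = - tr y x z
  ly3 : ∀ x y z,
    br (br x y) z + br (br y z) x + br (br z x) y + tr x y z + tr y z x + tr z x y = 0
  ly4 : ∀ x y z a, tr (br x y) z a + tr (br z x) y a + tr (br y z) x a = 0
  ly5 : ∀ a b x y, tr a b (br x y) = br (tr a b x) y + br x (tr a b y)
  ly6 : ∀ a b x y z,
    tr a b (tr x y z) = tr (tr a b x) y z + tr x (tr a b y) z + tr x y (tr a b z)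

/-- A modified Rota-Baxter operator on a Lie-Yamaguti algebra. -/
def IsMRB {K L : Type*} [Field K] [AddCommGroup L] [Module K L]
    (A : LieYamaguti K L) (R : L →ₗ[K] L) : Prop :=
  (∀ x y, A.br (R x) (R y) = R (A.br (R x) y + A.br x (R y)) - A.br x y) ∧
  (∀ x y z, A.tr (R x) (R y) (R z) =
      R (A.tr x (R y) (R z) + A.tr (R x) y (R z) + A.tr (R x) (R y) z + A.tr x y z)
      - A.tr (R x) y z - A.tr x (R y) z - A.tr x y (R z))

/-- A representation of a Lie-Yamaguti algebra on `V`, axioms (R1)-(R7). -/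
structure LYRep (K L V : Type*) [Field K] [AddCommGroup L] [Module K L]
    [AddCommGroup V] [Module K V] (A : LieYamaguti K L) where
  ρ : L →ₗ[K] Module.End K V
  θ : L →ₗ[K] L →ₗ[K] Module.End K V
  D : L →ₗ[K] L →ₗ[K] Module.End K V
  r1 : ∀ x y, D x y - θ y x + θ x y + ρ (A.br x y) - ρ x * ρ y + ρ y * ρ x = 0
  r2 : ∀ x y z, D (A.br x y) z + D (A.br y z) x + D (A.br z x) y = 0
  r3 : ∀ x y a, θ (A.br x y) a = θ x a * ρ y - θ y a * ρ x
  r4 : ∀ a b x, D a b * ρ x = ρ x * D a b + ρ (A.tr a b x)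
  r5 : ∀ x a b, θ x (A.br a b) = ρ a * θ x b - ρ b * θ x a
  r6 : ∀ a b x y, D a b * θ x y = θ x y * D a b + θ (A.tr a b x) y + θ x (A.tr a b y)
  r7 : ∀ a x y z, θ a (A.tr x y z) = θ y z * θ a x - θ x z * θ a y + D x y * θ a z

/-- A representation of a modified Rota-Baxter Lie-Yamaguti algebra `(L, R)`:
a representation of the underlying Lie-Yamaguti algebra together with a linear map
`RV` satisfying (4.1) and (4.2). -/
structure MRBRep (K L V : Type*) [Field K] [AddCommGroup L] [Module K L]
    [AddCommGroup V] [Module K V] (A : LieYamaguti K L) (R : L →ₗ[K] L)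
    extends LYRep K L V A where
  RV : V →ₗ[K] V
  c41 : ∀ (x : L) (u : V), ρ (R x) (RV u) = RV (ρ (R x) u + ρ x (RV u)) - ρ x u
  c42 : ∀ (x y : L) (u : V),
    θ (R x) (R y) (RV u) =
      RV (θ (R x) (R y) u + θ (R x) y (RV u) + θ x (R y) (RV u) + θ x y u)
      - θ (R x) y u - θ x y (RV u) - θ x (R y) u

/-!
By (R1), `D(a, b) = θ(b, a) - θ(a, b) - ρ([a, b]) + ρ(a)ρ(b) - ρ(b)ρ(a)`. The identity (4.2)
required of `θ` is additive in the operator family and survives swapping its two arguments,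
so (4.3) follows once each summand satisfies it: `θ` by (4.2), `ρ([a, b])` by (4.1) at the
argument `[Rx, y] + [x, Ry]`, whose image under `R` is `[Rx, Ry] + [x, y]`, and `ρ(a)ρ(b)`
by applying (4.1) twice.
-/

section MRBCompat

variable {K L V : Type*} [CommSemiring K] [AddCommGroup L] [Module K L]
  [AddCommGroup V] [Module K V] (R : L →ₗ[K] L) (RV : V →ₗ[K] V)

-- Conditions (4.1) and (4.2), for an arbitrary operator family in place of `ρ`, `θ`.
def IsMRBCompat (ρ : L →ₗ[K] Module.End K V) : Prop :=
  ∀ (x : L) (u : V), ρ (R x) (RV u) = RV (ρ (R x) u + ρ x (RV u)) - ρ x u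

def IsMRBCompat₂ (Φ : L → L → Module.End K V) : Prop :=
  ∀ (x y : L) (u : V),
    Φ (R x) (R y) (RV u) =
      RV (Φ (R x) (R y) u + Φ (R x) y (RV u) + Φ x (R y) (RV u) + Φ x y u)
      - Φ (R x) y u - Φ x y (RV u) - Φ x (R y) u

variable {R RV}

namespace IsMRBCompat₂

variable {Φ Ψ : L → L → Module.End K V}

theorem add (hΦ : IsMRBCompat₂ R RV Φ) (hΨ : IsMRBCompat₂ R RV Ψ) :
    IsMRBCompat₂ R RV (fun a b => Φ a b + Ψ a b) := by
  intro x y u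
  simp only [LinearMap.add_apply, hΦ x y u, hΨ x y u, map_add]
  abel

theorem sub (hΦ : IsMRBCompat₂ R RV Φ) (hΨ : IsMRBCompat₂ R RV Ψ) :
    IsMRBCompat₂ R RV (fun a b => Φ a b - Ψ a b) := by
  intro x y u
  simp only [LinearMap.sub_apply, hΦ x y u, hΨ x y u, map_add, map_sub]
  abel

theorem flip (hΦ : IsMRBCompat₂ R RV Φ) : IsMRBCompat₂ R RV (fun a b => Φ b a) := by
  intro x y u
  rw [hΦ y x u]
  abel_nf

end IsMRBCompat₂

namespace IsMRBCompat

variable {ρ : L →ₗ[K] Module.End K V}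

theorem mul (hρ : IsMRBCompat R RV ρ) : IsMRBCompat₂ R RV (fun a b => ρ a * ρ b) := by
  intro x y u
  have hy : RV (ρ (R y) u + ρ y (RV u)) = ρ (R y) (RV u) + ρ y u := by
    rw [hρ y u]; abel
  simp only [Module.End.mul_apply]
  rw [hρ y u, map_sub, hρ x, hy]
  simp only [map_add]
  abel_nf

theorem comp_bracket (hρ : IsMRBCompat R RV ρ) {br : L → L → L}
    (hbr : ∀ x y, br (R x) (R y) = R (br (R x) y + br x (R y)) - br x y) :
    IsMRBCompat₂ R RV (fun a b => ρ (br a b)) := by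
  intro x y u
  have hR : R (br (R x) y + br x (R y)) = br (R x) (R y) + br x y := by
    rw [hbr]; abel
  have h := hρ (br (R x) y + br x (R y)) u
  simp only [hR, map_add, LinearMap.add_apply] at h ⊢
  linear_combination (norm := abel) h

end IsMRBCompat

end MRBCompat

theorem LYRep.D_eq {K L V : Type*} [Field K] [AddCommGroup L] [Module K L]
    [AddCommGroup V] [Module K V] {A : LieYamaguti K L} (rep : LYRep K L V A) (a b : L) :
    rep.D a b = rep.θ b a - rep.θ a b - rep.ρ (A.br a b) + rep.ρ a * rep.ρ b
      - rep.ρ b * rep.ρ a := by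
  rw [← sub_eq_zero, ← rep.r1 a b]
  abel

theorem mrbRep_D_compat_general (K L V : Type*) [Field K]
    [AddCommGroup L] [Module K L] [AddCommGroup V] [Module K V]
    (A : LieYamaguti K L) (R : L →ₗ[K] L) (hR : IsMRB A R)
    (rep : MRBRep K L V A R) :
    ∀ (x y : L) (u : V),
      rep.D (R x) (R y) (rep.RV u)
        = rep.RV (rep.D (R x) (R y) u + rep.D (R x) y (rep.RV u)
            + rep.D x (R y) (rep.RV u) + rep.D x y u)
          - rep.D (R x) y u - rep.D x y (rep.RV u) - rep.D x (R y) u := by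
  have hθ : IsMRBCompat₂ R rep.RV (fun a b => rep.θ a b) := rep.c42
  have hρ : IsMRBCompat R rep.RV rep.ρ := rep.c41
  have hD : IsMRBCompat₂ R rep.RV (fun a b => rep.D a b) := by
    simp only [rep.D_eq]
    exact (((hθ.flip.sub hθ).sub (hρ.comp_bracket hR.1)).add hρ.mul).sub hρ.mul.flip
  exact hD

/-- In any representation of a modified Rota-Baxter Lie-Yamaguti algebra, identity (4.3)
holds for `D`. -/
theorem mrbRep_D_compat (K L V : Type*) [Field K] [CharZero K]
    [AddCommGroup L] [Module K L] [AddCommGroup V] [Module K V]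
    (A : LieYamaguti K L) (R : L →ₗ[K] L) (hR : IsMRB A R)
    (rep : MRBRep K L V A R) :
    ∀ (x y : L) (u : V),
      rep.D (R x) (R y) (rep.RV u)
        = rep.RV (rep.D (R x) (R y) u + rep.D (R x) y (rep.RV u)
            + rep.D x (R y) (rep.RV u) + rep.D x y u)
          - rep.D (R x) y u - rep.D x y (rep.RV u) - rep.D x (R y) u :=
  mrbRep_D_compat_general K L V A R hR rep
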